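/- arXiv:1804.04061 — 5 statements merged into one kernel-verified Lean document; each statement's English description precedes it below -/
import Mathlib

section
/- For every Δt₀ ∈ (0,1], all t ∈ [0,Δt₀] and all z ∈ ℝ, one has the one-sided derivative bound Ψ_t′(z) ≤ e^{Δt₀}. -/
/-!
Differentiating `Φ_t(z) = z / √D` with `D = z² + (1 - z²) e^{-2t}` gives `Φ_t′(z) = e^{-2t} / D^{3/2}`.
For `t ≥ 0` we have `D = e^{-2t} + z² (1 - e^{-2t}) ≥ e^{-2t}`, hence `Φ_t′ ≤ e^{-2t} / e^{-3t} = e^t`.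
Then `Ψ_t′ = (Φ_t′ - 1)/t ≤ (e^t - 1)/t ≤ e^t ≤ e^{Δt₀}`, while `Ψ_0′(z) = 1 - 3z² ≤ 1`.
-/

noncomputable section

/-- The flow map `Φ_t(z) = z / √(z² + (1 - z²) e^{-2t})` of the ODE `ż = z - z³`. -/
def Phi (t z : ℝ) : ℝ := z / Real.sqrt (z ^ 2 + (1 - z ^ 2) * Real.exp (-2 * t))

/-- `Ψ_t(z) = (Φ_t(z) - z)/t` for `t > 0`, and `Ψ_0(z) = z - z³`. -/
def Psi (t z : ℝ) : ℝ := if t = 0 then z - z ^ 3 else (Phi t z - z) / t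

open Real

def phiRadicand (t z : ℝ) : ℝ := z ^ 2 + (1 - z ^ 2) * exp (-2 * t)

lemma phiRadicand_eq (t z : ℝ) : phiRadicand t z = exp (-2 * t) + z ^ 2 * (1 - exp (-2 * t)) := by
  unfold phiRadicand; ring

lemma exp_neg_two_mul_le_phiRadicand {t : ℝ} (ht : 0 ≤ t) (z : ℝ) :
    exp (-2 * t) ≤ phiRadicand t z := by
  have h : exp (-2 * t) ≤ 1 := exp_le_one_iff.mpr (by linarith)
  rw [phiRadicand_eq]
  nlinarith [sq_nonneg z]

lemma phiRadicand_pos {t : ℝ} (ht : 0 ≤ t) (z : ℝ) : 0 < phiRadicand t z :=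
  (exp_pos _).trans_le (exp_neg_two_mul_le_phiRadicand ht z)

lemma hasDerivAt_phiRadicand (t z : ℝ) :
    HasDerivAt (phiRadicand t) (2 * z * (1 - exp (-2 * t))) z := by
  have h := (hasDerivAt_pow 2 z).fun_add
    (((hasDerivAt_const z (1 : ℝ)).fun_sub (hasDerivAt_pow 2 z)).mul_const (exp (-2 * t)))
  exact h.congr_deriv (by ring)

lemma hasDerivAt_phi {t z : ℝ} (hD : 0 < phiRadicand t z) :
    HasDerivAt (Phi t) (exp (-2 * t) / (phiRadicand t z * √(phiRadicand t z))) z := by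
  have hs : 0 < √(phiRadicand t z) := sqrt_pos.mpr hD
  have hsq : √(phiRadicand t z) ^ 2 = phiRadicand t z := sq_sqrt hD.le
  have h := (hasDerivAt_id' z).fun_div ((hasDerivAt_phiRadicand t z).sqrt hD.ne') hs.ne'
  refine h.congr_deriv ?_
  set a := exp (-2 * t)
  set D := phiRadicand t z
  field_simp
  linear_combination (D - a) * hsq + D * phiRadicand_eq t z

lemma deriv_phi_le_exp {t : ℝ} (ht : 0 ≤ t) (z : ℝ) : deriv (Phi t) z ≤ exp t := by
  set D := phiRadicand t z
  have hD : exp (-2 * t) ≤ D := exp_neg_two_mul_le_phiRadicand ht z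
  have hsqrt : exp (-t) ≤ √D :=
    le_sqrt_of_sq_le (by rw [← exp_nat_mul]; convert hD using 2; ring)
  rw [(hasDerivAt_phi (phiRadicand_pos ht z)).deriv]
  calc exp (-2 * t) / (D * √D) ≤ exp (-2 * t) / (exp (-2 * t) * exp (-t)) := by
        gcongr
        exact (exp_pos _).le.trans hD
    _ = exp t := by rw [div_eq_iff (by positivity), ← exp_add, ← exp_add]; ring_nf

lemma deriv_psi_zero (z : ℝ) : deriv (Psi 0) z = 1 - 3 * z ^ 2 := by
  have h : Psi 0 = fun w => w - w ^ 3 := by funext w; simp [Psi]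
  rw [h, ((hasDerivAt_id' z).fun_sub (hasDerivAt_pow 3 z)).deriv]
  norm_num

lemma deriv_psi_of_ne_zero {t z : ℝ} (ht : t ≠ 0) (hΦ : DifferentiableAt ℝ (Phi t) z) :
    deriv (Psi t) z = (deriv (Phi t) z - 1) / t := by
  have h : Psi t = fun w => (Phi t w - w) / t := by funext w; simp [Psi, ht]
  rw [h, (hΦ.hasDerivAt.fun_sub (hasDerivAt_id' z)).div_const t |>.deriv]

lemma exp_sub_one_le_mul_exp (x : ℝ) : exp x - 1 ≤ x * exp x := by
  have h := mul_le_mul_of_nonneg_right (one_sub_le_exp_neg x) (exp_pos x).le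
  rw [← exp_add, neg_add_cancel, exp_zero] at h
  linarith

lemma deriv_psi_le_exp {t : ℝ} (ht : 0 ≤ t) (z : ℝ) : deriv (Psi t) z ≤ exp t := by
  rcases ht.eq_or_lt with rfl | ht
  · rw [deriv_psi_zero, exp_zero]
    linarith [sq_nonneg z]
  · rw [deriv_psi_of_ne_zero ht.ne' (hasDerivAt_phi (phiRadicand_pos ht.le z)).differentiableAt,
      div_le_iff₀ ht]
    linarith [deriv_phi_le_exp ht.le z, exp_sub_one_le_mul_exp t]

theorem psi_deriv_one_sided_bound_general (Δt₀ : ℝ)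
    (t : ℝ) (ht : t ∈ Set.Icc 0 Δt₀) (z : ℝ) :
    deriv (Psi t) z ≤ Real.exp Δt₀ :=
  (deriv_psi_le_exp ht.1 z).trans (exp_le_exp.mpr ht.2)

/-- For every `Δt₀ ∈ (0,1]`, all `t ∈ [0, Δt₀]` and all `z ∈ ℝ`,
the one-sided derivative bound `Ψ_t′(z) ≤ e^{Δt₀}` holds. -/
theorem psi_deriv_one_sided_bound (Δt₀ : ℝ) (hΔt₀ : Δt₀ ∈ Set.Ioc (0 : ℝ) 1)
    (t : ℝ) (ht : t ∈ Set.Icc 0 Δt₀) (z : ℝ) :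
    deriv (Psi t) z ≤ Real.exp Δt₀ :=
  psi_deriv_one_sided_bound_general Δt₀ t ht z

end
end

section
/- For every Δt₀ ∈ (0,1] there exists a constant C(Δt₀) ∈ (0,∞) such that |Ψ_t″(z)| ≤ C(Δt₀)(1 + |z|) for all t ∈ [0,Δt₀] and all z ∈ ℝ. -/
/-!
With `a = e^{-2t}` one has `Φ_t(z) = z (a + (1 - a) z²)^{-1/2}`, hence
`Φ_t″(z) = -3 a (1 - a) z (a + (1 - a) z²)^{-5/2}`.
Since `1 - a ≤ 2t` and `a + (1 - a) z² ≥ a`, this gives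
`|Ψ_t″(z)| = |Φ_t″(z)| / t ≤ 6 a^{-3/2} |z| = 6 e^{3t} |z|`, and also `Ψ_0″(z) = -6z`.
-/

noncomputable section

open Real

section
variable {a b : ℝ}

lemma hasDerivAt_mul_rpow_neg_one_half (ha : 0 < a) (hb : 0 ≤ b) (z : ℝ) :
    HasDerivAt (fun z => z * (a + b * z ^ 2) ^ (-(1 / 2) : ℝ))
      (a * (a + b * z ^ 2) ^ (-(3 / 2) : ℝ)) z := by
  have hQ : 0 < a + b * z ^ 2 := by positivity
  have hQ' : HasDerivAt (fun z => a + b * z ^ 2) (b * (2 * z)) z := by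
    simpa using ((hasDerivAt_pow 2 z).const_mul b).const_add a
  refine ((hasDerivAt_id z).mul (hQ'.rpow_const (p := -(1 / 2)) (Or.inl hQ.ne'))).congr_deriv ?_
  have h : (a + b * z ^ 2) ^ (-(1 / 2) : ℝ)
      = (a + b * z ^ 2) * (a + b * z ^ 2) ^ (-(3 / 2) : ℝ) := by
    rw [← rpow_one_add' hQ.le (by norm_num)]; norm_num
  rw [h, show (-(1 / 2) : ℝ) - 1 = -(3 / 2) by norm_num, id]
  ring

lemma hasDerivAt_const_mul_rpow_neg_three_halves (ha : 0 < a) (hb : 0 ≤ b) (z : ℝ) :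
    HasDerivAt (fun z => a * (a + b * z ^ 2) ^ (-(3 / 2) : ℝ))
      (-3 * a * b * z * (a + b * z ^ 2) ^ (-(5 / 2) : ℝ)) z := by
  have hQ : 0 < a + b * z ^ 2 := by positivity
  have hQ' : HasDerivAt (fun z => a + b * z ^ 2) (b * (2 * z)) z := by
    simpa using ((hasDerivAt_pow 2 z).const_mul b).const_add a
  refine ((hQ'.rpow_const (p := -(3 / 2)) (Or.inl hQ.ne')).const_mul a).congr_deriv ?_
  rw [show (-(3 / 2) : ℝ) - 1 = -(5 / 2) by norm_num]
  ring

lemma const_mul_rpow_neg_five_halves_le (ha : 0 < a) (hb : 0 ≤ b) (z : ℝ) :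
    a * (a + b * z ^ 2) ^ (-(5 / 2) : ℝ) ≤ a ^ (-(3 / 2) : ℝ) :=
  calc a * (a + b * z ^ 2) ^ (-(5 / 2) : ℝ) ≤ a * a ^ (-(5 / 2) : ℝ) :=
        mul_le_mul_of_nonneg_left
          (rpow_le_rpow_of_nonpos ha (le_add_of_nonneg_right (by positivity)) (by norm_num)) ha.le
    _ = a ^ (-(3 / 2) : ℝ) := by
        rw [← rpow_one_add' ha.le (by norm_num)]; norm_num

end

lemma one_sub_exp_neg_two_mul_nonneg {t : ℝ} (ht : 0 ≤ t) : 0 ≤ 1 - exp (-2 * t) :=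
  sub_nonneg.mpr (exp_le_one_iff.mpr (by linarith))

lemma one_sub_exp_neg_two_mul_le (t : ℝ) : 1 - exp (-2 * t) ≤ 2 * t := by
  linarith [add_one_le_exp (-2 * t)]

lemma Phi_eq_mul_rpow {t : ℝ} (ht : 0 ≤ t) :
    Phi t = fun z => z * (exp (-2 * t) + (1 - exp (-2 * t)) * z ^ 2) ^ (-(1 / 2) : ℝ) := by
  funext z
  have hQ : 0 ≤ exp (-2 * t) + (1 - exp (-2 * t)) * z ^ 2 :=
    add_nonneg (exp_pos _).le (mul_nonneg (one_sub_exp_neg_two_mul_nonneg ht) (sq_nonneg z))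
  rw [Phi, rpow_neg hQ, ← sqrt_eq_rpow, div_eq_mul_inv]
  ring_nf

lemma deriv_deriv_Psi_zero (z : ℝ) : deriv (deriv (Psi 0)) z = -6 * z := by
  have hPsi : Psi 0 = fun z => z - z ^ 3 := by funext z; simp [Psi]
  have hd : deriv (Psi 0) = fun z => 1 - 3 * z ^ 2 := by
    funext z; rw [hPsi]; simp
  rw [hd]; simp; ring

lemma deriv_deriv_Psi_of_pos {t : ℝ} (ht : 0 < t) (z : ℝ) :
    deriv (deriv (Psi t)) z = -3 * exp (-2 * t) * (1 - exp (-2 * t)) * z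
      * (exp (-2 * t) + (1 - exp (-2 * t)) * z ^ 2) ^ (-(5 / 2) : ℝ) / t := by
  have ha := exp_pos (-2 * t)
  have hb := one_sub_exp_neg_two_mul_nonneg ht.le
  have hPsi : Psi t = fun z => (Phi t z - z) / t := by
    funext z; simp [Psi, ht.ne']
  have hd : deriv (Psi t) = fun z =>
      (exp (-2 * t) * (exp (-2 * t) + (1 - exp (-2 * t)) * z ^ 2) ^ (-(3 / 2) : ℝ) - 1) / t := by
    funext z
    rw [hPsi, Phi_eq_mul_rpow ht.le]
    exact (((hasDerivAt_mul_rpow_neg_one_half ha hb z).sub (hasDerivAt_id z)).div_const t).deriv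
  rw [hd]
  exact (((hasDerivAt_const_mul_rpow_neg_three_halves ha hb z).sub_const 1).div_const t).deriv

lemma abs_deriv_deriv_Psi_le {t : ℝ} (ht : 0 ≤ t) (z : ℝ) :
    |deriv (deriv (Psi t)) z| ≤ 6 * exp (3 * t) * |z| := by
  rcases ht.eq_or_lt with rfl | ht
  · simp [deriv_deriv_Psi_zero, abs_mul]
  set a := exp (-2 * t)
  set b := 1 - exp (-2 * t)
  have ha : 0 < a := exp_pos _
  have hb : 0 ≤ b := one_sub_exp_neg_two_mul_nonneg ht.le
  have hexp : a ^ (-(3 / 2) : ℝ) = exp (3 * t) := by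
    rw [← exp_mul]; ring_nf
  have hE := const_mul_rpow_neg_five_halves_le ha hb z
  rw [hexp] at hE
  rw [deriv_deriv_Psi_of_pos ht]
  calc |-3 * a * b * z * (a + b * z ^ 2) ^ (-(5 / 2) : ℝ) / t|
      = 3 * (b / t) * (a * (a + b * z ^ 2) ^ (-(5 / 2) : ℝ)) * |z| := by
        rw [abs_div, abs_of_pos ht, abs_mul, abs_mul, abs_mul, abs_mul,
          abs_of_pos (rpow_pos_of_pos (by positivity) _), abs_of_pos ha, abs_of_nonneg hb]
        norm_num; ring
    _ ≤ 3 * 2 * exp (3 * t) * |z| := by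
        have : b / t ≤ 2 := (div_le_iff₀ ht).mpr (one_sub_exp_neg_two_mul_le t)
        gcongr
    _ = 6 * exp (3 * t) * |z| := by ring

theorem psi_second_deriv_linear_growth_general (Δt₀ : ℝ) :
    ∃ C : ℝ, 0 < C ∧ ∀ t ∈ Set.Icc (0 : ℝ) Δt₀, ∀ z : ℝ,
      |deriv (deriv (Psi t)) z| ≤ C * (1 + |z|) := by
  refine ⟨6 * exp (3 * Δt₀), by positivity, fun t ht z => ?_⟩
  calc |deriv (deriv (Psi t)) z| ≤ 6 * exp (3 * t) * |z| := abs_deriv_deriv_Psi_le ht.1 z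
    _ ≤ 6 * exp (3 * Δt₀) * (1 + |z|) := by
        gcongr
        · exact ht.2
        · linarith

/-- For every `Δt₀ ∈ (0,1]` there exists `C(Δt₀) ∈ (0,∞)` such that
`|Ψ_t″(z)| ≤ C(Δt₀) (1 + |z|)` for all `t ∈ [0, Δt₀]` and all `z ∈ ℝ`. -/
theorem psi_second_deriv_linear_growth (Δt₀ : ℝ) (hΔt₀ : Δt₀ ∈ Set.Ioc (0 : ℝ) 1) :
    ∃ C : ℝ, 0 < C ∧ ∀ t ∈ Set.Icc (0 : ℝ) Δt₀, ∀ z : ℝ,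
      |deriv (deriv (Psi t)) z| ≤ C * (1 + |z|) :=
  psi_second_deriv_linear_growth_general Δt₀

end
end

section
/- For every Δt₀ ∈ (0,1] there exists a constant C(Δt₀) ∈ (0,∞) such that |Ψ_t(z) − Ψ_0(z)| ≤ C(Δt₀) t (1 + |z|⁵) for all t ∈ [0,Δt₀] and all z ∈ ℝ. -/
noncomputable section

/-!
Write `s = 1 - e^{-2t}`, `w = 1 - z²` and `r = √(1 - w s)`, so that `Φ_t(z) = z / r`. Rationalising
`1/r - 1 = w s / (r (1 + r))` gives
`Φ_t(z) - z - t (z - z³) = z w (s - t r (1 + r)) / (r (1 + r))`.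
Since `s = 2t + O(t²)` and `|1 - r| ≤ |1 - r²| = |w| s`, the factor `s - t r (1 + r)` is
`O(t² (1 + z²))`, while `r ≥ e^{-t}` keeps the denominator away from `0`.
-/

open Real

lemma Real.exp_neg_le_one_sub_add_sq {x : ℝ} (hx : 0 ≤ x) : exp (-x) ≤ 1 - x + x ^ 2 := by
  have hpos : 0 < 1 + x := by linarith
  calc exp (-x) = (exp x)⁻¹ := exp_neg x
    _ ≤ (1 + x)⁻¹ := inv_anti₀ hpos (by linarith [add_one_le_exp x])
    _ ≤ 1 - x + x ^ 2 := by
      rw [inv_le_iff_one_le_mul₀ hpos]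
      nlinarith [pow_nonneg hx 3]

lemma Real.abs_one_sub_exp_neg_sub_le {x : ℝ} (hx : 0 ≤ x) : |1 - exp (-x) - x| ≤ x ^ 2 := by
  rw [abs_le]
  constructor
  · linarith [exp_neg_le_one_sub_add_sq hx]
  · linarith [add_one_le_exp (-x), sq_nonneg x]

lemma abs_one_sub_le_abs_one_sub_sq {r : ℝ} (hr : 0 ≤ r) : |1 - r| ≤ |1 - r ^ 2| := by
  calc |1 - r| ≤ |1 - r| * (1 + r) := le_mul_of_one_le_right (abs_nonneg _) (by linarith)
    _ = |1 - r ^ 2| := by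
      rw [← abs_of_nonneg (by linarith : (0 : ℝ) ≤ 1 + r), ← abs_mul]
      ring_nf

lemma mul_one_add_sq_sq_le {a : ℝ} (ha : 0 ≤ a) : a * (1 + a ^ 2) ^ 2 ≤ 4 * (1 + a ^ 5) := by
  nlinarith [mul_nonneg ha (sq_nonneg (a ^ 2 - 1)), mul_nonneg (mul_nonneg ha ha) (sq_nonneg (a - 1)),
    mul_nonneg ha (sq_nonneg (a - 1))]

lemma div_sub_self_sub_mul_eq {r s t w z : ℝ} (hr : 0 < r) (hrs : r ^ 2 = 1 - w * s) :
    z / r - z - t * (z * w) = z * w * (s - t * (r * (1 + r))) / (r * (1 + r)) := by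
  have : 1 + r ≠ 0 := by positivity
  field_simp
  linear_combination (-z) * hrs

lemma abs_sub_mul_mul_one_add_le {r s t w : ℝ} (hr : 0 ≤ r) (ht : 0 ≤ t)
    (hrs : r ^ 2 = 1 - w * s) :
    |s - t * (r * (1 + r))| ≤ |s - 2 * t| + 2 * t * |w * s| := by
  have h1r : |1 - r| ≤ |w * s| := by
    simpa [hrs] using abs_one_sub_le_abs_one_sub_sq hr
  calc |s - t * (r * (1 + r))| = |(s - 2 * t) + t * ((1 - r) + (1 - r ^ 2))| := by ring_nf
    _ ≤ |s - 2 * t| + t * (|1 - r| + |1 - r ^ 2|) := by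
      grw [abs_add_le, abs_mul, abs_of_nonneg ht, abs_add_le]
    _ ≤ |s - 2 * t| + 2 * t * |w * s| := by
      rw [hrs, sub_sub_cancel]
      nlinarith

lemma exp_neg_le_sqrt_sq_add_one_sub_sq_mul_exp {t : ℝ} (ht : 0 ≤ t) (z : ℝ) :
    exp (-t) ≤ √(z ^ 2 + (1 - z ^ 2) * exp (-2 * t)) := by
  apply le_sqrt_of_sq_le
  have : exp (-2 * t) ≤ 1 := exp_le_one_iff.mpr (by linarith)
  have hsq : exp (-t) ^ 2 = exp (-2 * t) := by rw [← exp_nat_mul]; ring_nf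
  rw [hsq]
  nlinarith [sq_nonneg z, exp_pos (-2 * t)]

theorem abs_phi_sub_sub_le {t : ℝ} (ht : 0 ≤ t) (z : ℝ) :
    |Phi t z - z - t * (z - z ^ 3)| ≤ 8 * exp t * t ^ 2 * (|z| * (1 + z ^ 2) ^ 2) := by
  set s := 1 - exp (-2 * t)
  set w := 1 - z ^ 2
  set r := √(z ^ 2 + (1 - z ^ 2) * exp (-2 * t)) with hr
  have hr_lb : exp (-t) ≤ r := exp_neg_le_sqrt_sq_add_one_sub_sq_mul_exp ht z
  have hr_pos : 0 < r := (exp_pos _).trans_le hr_lb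
  have hrs : r ^ 2 = 1 - w * s := by
    rw [hr, sq_sqrt (sqrt_pos.mp hr_pos).le]
    ring
  have hs : |s - 2 * t| ≤ 4 * t ^ 2 := by
    simpa [s, mul_pow, neg_mul, show (2 : ℝ) ^ 2 = 4 by norm_num] using
      abs_one_sub_exp_neg_sub_le (by positivity : 0 ≤ 2 * t)
  have hs0 : 0 ≤ s := sub_nonneg.mpr (exp_le_one_iff.mpr (by linarith))
  have hs2t : s ≤ 2 * t := by linarith [add_one_le_exp (-2 * t)]
  have hw : |w| ≤ 1 + z ^ 2 := by
    rw [abs_le]; constructor <;> linarith [sq_nonneg z]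
  have hnum : |s - t * (r * (1 + r))| ≤ 8 * t ^ 2 * (1 + z ^ 2) := by
    calc |s - t * (r * (1 + r))| ≤ |s - 2 * t| + 2 * t * (|w| * s) := by
          simpa [abs_mul, abs_of_nonneg hs0] using abs_sub_mul_mul_one_add_le hr_pos.le ht hrs
      _ ≤ 4 * t ^ 2 + 2 * t * ((1 + z ^ 2) * (2 * t)) := by gcongr
      _ ≤ 8 * t ^ 2 * (1 + z ^ 2) := by nlinarith [mul_nonneg (sq_nonneg t) (sq_nonneg z)]
  have hden : 1 ≤ exp t * (r * (1 + r)) := by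
    calc (1 : ℝ) = exp t * exp (-t) := by rw [← exp_add, add_neg_cancel, exp_zero]
      _ ≤ exp t * (r * (1 + r)) := by gcongr; nlinarith
  have hphi : Phi t z - z - t * (z - z ^ 3) = z / r - z - t * (z * w) := by
    rw [Phi, ← hr]; ring
  have hden_pos : 0 < r * (1 + r) := by positivity
  rw [hphi, div_sub_self_sub_mul_eq hr_pos hrs, abs_div, abs_of_pos hden_pos, div_le_iff₀ hden_pos,
    abs_mul, abs_mul]
  calc |z| * |w| * |s - t * (r * (1 + r))|
      ≤ |z| * (1 + z ^ 2) * (8 * t ^ 2 * (1 + z ^ 2)) * (exp t * (r * (1 + r))) := by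
        grw [hw, hnum, ← hden]; rw [mul_one]
    _ = 8 * exp t * t ^ 2 * (|z| * (1 + z ^ 2) ^ 2) * (r * (1 + r)) := by ring

lemma psi_sub_psi_zero {t : ℝ} (ht : t ≠ 0) (z : ℝ) :
    Psi t z - Psi 0 z = (Phi t z - z - t * (z - z ^ 3)) / t := by
  rw [Psi, Psi, if_neg ht, if_pos rfl]
  field_simp

theorem psi_minus_psi_zero_bound_general (Δt₀ : ℝ) :
    ∃ C : ℝ, 0 < C ∧ ∀ t ∈ Set.Icc (0 : ℝ) Δt₀, ∀ z : ℝ,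
      |Psi t z - Psi 0 z| ≤ C * t * (1 + |z| ^ 5) := by
  refine ⟨32 * exp Δt₀, by positivity, ?_⟩
  rintro t ⟨ht0, htΔ⟩ z
  rcases ht0.eq_or_lt with rfl | ht
  · simp
  rw [psi_sub_psi_zero ht.ne', abs_div, abs_of_pos ht, div_le_iff₀ ht]
  have hz : |z| * (1 + z ^ 2) ^ 2 ≤ 4 * (1 + |z| ^ 5) := by
    simpa only [sq_abs] using mul_one_add_sq_sq_le (abs_nonneg z)
  calc |Phi t z - z - t * (z - z ^ 3)| ≤ 8 * exp t * t ^ 2 * (|z| * (1 + z ^ 2) ^ 2) :=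
        abs_phi_sub_sub_le ht.le z
    _ ≤ 8 * exp Δt₀ * t ^ 2 * (4 * (1 + |z| ^ 5)) := by gcongr
    _ = 32 * exp Δt₀ * t * (1 + |z| ^ 5) * t := by ring

/-- For every `Δt₀ ∈ (0,1]` there exists `C(Δt₀) ∈ (0,∞)` such that
`|Ψ_t(z) - Ψ_0(z)| ≤ C(Δt₀) t (1 + |z|⁵)` for all `t ∈ [0, Δt₀]` and all `z ∈ ℝ`. -/
theorem psi_minus_psi_zero_bound (Δt₀ : ℝ) (hΔt₀ : Δt₀ ∈ Set.Ioc (0 : ℝ) 1) :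
    ∃ C : ℝ, 0 < C ∧ ∀ t ∈ Set.Icc (0 : ℝ) Δt₀, ∀ z : ℝ,
      |Psi t z - Psi 0 z| ≤ C * t * (1 + |z| ^ 5) :=
  psi_minus_psi_zero_bound_general Δt₀

end
end

section
/- For every Δt₀ ∈ (0,1] there exists a constant C(Δt₀) ∈ (0,∞) such that for all 0 ≤ τ ≤ Δt ≤ Δt₀ and all z ∈ ℝ, |Ψ_{Δt}(z) − Ψ_{Δt}(Φ_τ(z))| ≤ C(Δt₀) Δt (1 + |z|⁵). -/
noncomputable section

/-!
Since `Φ` is a semigroup, `Δt · (Ψ_{Δt}(z) - Ψ_{Δt}(Φ_τ z))` is, up to sign, the second difference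
`Φ_{τ+Δt} - Φ_τ - Φ_{Δt} + Φ_0` of the flow `t ↦ Φ_t z` of `ż = z - z³`. Along the flow
`|Φ_t z| ≤ M := max 1 |z|`, so the velocity `f(Φ_t z)`, `f(x) = x - x³`, is bounded by `M + M³` and,
`f` being `(1 + 3M²)`-Lipschitz on `[-M, M]`, is itself Lipschitz in `t` with constant
`(1 + 3M²)(M + M³) ≤ 8M⁵`. Two applications of the mean value inequality bound the second difference
by `8M⁵ Δt τ ≤ 8(1 + |z|⁵) Δt²`.
-/

open Set

section MeanValue

variable {φ φ' : ℝ → ℝ}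

theorem abs_sub_le_of_hasDerivWithinAt_Ici {C a b : ℝ}
    (hφ : ∀ t ∈ Ici (0 : ℝ), HasDerivWithinAt φ (φ' t) (Ici 0) t)
    (hC : ∀ t ∈ Ici (0 : ℝ), |φ' t| ≤ C) (ha : 0 ≤ a) (hab : a ≤ b) :
    |φ b - φ a| ≤ C * (b - a) := by
  simpa [Real.norm_eq_abs, abs_of_nonneg (sub_nonneg.2 hab)] using
    (convex_Ici 0).norm_image_sub_le_of_norm_hasDerivWithin_le hφ hC ha (ha.trans hab)

theorem abs_second_difference_le {K τ h : ℝ}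
    (hφ : ∀ t ∈ Ici (0 : ℝ), HasDerivWithinAt φ (φ' t) (Ici 0) t)
    (hφ' : ∀ s t, 0 ≤ s → s ≤ t → |φ' t - φ' s| ≤ K * (t - s)) (hτ : 0 ≤ τ) (hh : 0 ≤ h) :
    |φ (τ + h) - φ τ - (φ h - φ 0)| ≤ K * h * τ := by
  have hmaps : MapsTo (· + h) (Ici (0 : ℝ)) (Ici 0) := fun s hs => by
    simp only [mem_Ici] at hs ⊢; linarith
  have hshift : ∀ t ∈ Ici (0 : ℝ), HasDerivWithinAt (fun s => φ (s + h) - φ s)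
      (φ' (t + h) - φ' t) (Ici 0) t := fun t ht =>
    (((hφ (t + h) (hmaps ht)).comp t ((hasDerivAt_id t).add_const h).hasDerivWithinAt
      hmaps).congr_deriv (mul_one _)).sub (hφ t ht)
  have hbound : ∀ t ∈ Ici (0 : ℝ), |φ' (t + h) - φ' t| ≤ K * h := fun t ht => by
    simpa using hφ' t (t + h) ht (by linarith)
  simpa using abs_sub_le_of_hasDerivWithinAt_Ici hshift hbound le_rfl hτ

end MeanValue

theorem abs_sub_cube_le {x M : ℝ} (hx : |x| ≤ M) : |x - x ^ 3| ≤ M + M ^ 3 :=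
  calc |x - x ^ 3| ≤ |x| + |x| ^ 3 := (abs_sub x (x ^ 3)).trans_eq (by rw [abs_pow])
    _ ≤ M + M ^ 3 := by gcongr

theorem abs_sub_cube_sub_sub_cube_le {x y M : ℝ} (hx : |x| ≤ M) (hy : |y| ≤ M) :
    |(x - x ^ 3) - (y - y ^ 3)| ≤ (1 + 3 * M ^ 2) * |x - y| := by
  have hx2 : x ^ 2 ≤ M ^ 2 := sq_le_sq' (abs_le.1 hx).1 (abs_le.1 hx).2
  have hy2 : y ^ 2 ≤ M ^ 2 := sq_le_sq' (abs_le.1 hy).1 (abs_le.1 hy).2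
  have hxy : |x * y| ≤ M ^ 2 := by
    rw [abs_mul, sq]; exact mul_le_mul hx hy (abs_nonneg y) ((abs_nonneg x).trans hx)
  have hfactor : |1 - x ^ 2 - x * y - y ^ 2| ≤ 1 + 3 * M ^ 2 := by
    rw [abs_le]; constructor <;> nlinarith [abs_le.1 hxy, sq_nonneg x, sq_nonneg y]
  calc |(x - x ^ 3) - (y - y ^ 3)| = |1 - x ^ 2 - x * y - y ^ 2| * |x - y| := by
        rw [← abs_mul]; ring_nf
    _ ≤ (1 + 3 * M ^ 2) * |x - y| := by gcongr

theorem one_add_three_mul_sq_mul_add_cube_le {M : ℝ} (hM : 1 ≤ M) :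
    (1 + 3 * M ^ 2) * (M + M ^ 3) ≤ 8 * M ^ 5 := by
  nlinarith [pow_le_pow_right₀ hM (show 1 ≤ 5 by norm_num),
    pow_le_pow_right₀ hM (show 3 ≤ 5 by norm_num), pow_le_pow_right₀ hM (show 3 ≤ 4 by norm_num)]

theorem max_one_abs_pow_le (z : ℝ) (n : ℕ) : max 1 |z| ^ n ≤ 1 + |z| ^ n := by
  rcases le_total |z| 1 with h | h
  · simp [max_eq_left h]
  · rw [max_eq_right h]; linarith

section Flow

variable {t τ h : ℝ} (z : ℝ)

theorem Phi_radicand_pos (ht : 0 ≤ t) : 0 < z ^ 2 + (1 - z ^ 2) * Real.exp (-2 * t) := by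
  have : Real.exp (-2 * t) ≤ 1 := Real.exp_le_one_iff.mpr (by linarith)
  nlinarith [Real.exp_pos (-2 * t), sq_nonneg z]

theorem Phi_zero : Phi 0 z = z := by
  simp [Phi]

theorem abs_Phi_le (ht : 0 ≤ t) : |Phi t z| ≤ max 1 |z| := by
  have hD := Phi_radicand_pos z ht
  have hE : Real.exp (-2 * t) ≤ 1 := Real.exp_le_one_iff.mpr (by linarith)
  refine abs_le_of_sq_le_sq ?_ (zero_le_one.trans (le_max_left _ _))
  rw [Phi, div_pow, Real.sq_sqrt hD.le, div_le_iff₀ hD]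
  rcases le_total |z| 1 with hz | hz
  · have : z ^ 2 ≤ 1 := by nlinarith [sq_abs z, abs_nonneg z]
    rw [max_eq_left hz]
    nlinarith [Real.exp_pos (-2 * t)]
  · have : 1 ≤ z ^ 2 := by nlinarith [sq_abs z]
    rw [max_eq_right hz, sq_abs]
    nlinarith [mul_nonneg (mul_nonneg (sq_nonneg z) (sub_nonneg.2 this)) (sub_nonneg.2 hE)]

theorem Phi_Phi (hτ : 0 ≤ τ) (hh : 0 ≤ h) : Phi h (Phi τ z) = Phi (τ + h) z := by
  have hDτ := Phi_radicand_pos z hτ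
  have hDf := Phi_radicand_pos z (add_nonneg hτ hh)
  have hexp : Real.exp (-2 * (τ + h)) = Real.exp (-2 * τ) * Real.exp (-2 * h) := by
    rw [← Real.exp_add]; ring_nf
  have hradicand : Phi τ z ^ 2 + (1 - Phi τ z ^ 2) * Real.exp (-2 * h)
      = (z ^ 2 + (1 - z ^ 2) * Real.exp (-2 * (τ + h))) /
        (z ^ 2 + (1 - z ^ 2) * Real.exp (-2 * τ)) := by
    rw [Phi, div_pow, Real.sq_sqrt hDτ.le, hexp]
    generalize Real.exp (-2 * τ) = Eτ at hDτ ⊢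
    field_simp
    ring
  rw [Phi, hradicand, Real.sqrt_div hDf.le, Phi, Phi, div_div_div_cancel_right₀]
  exact (Real.sqrt_pos.2 hDτ).ne'

theorem hasDerivWithinAt_Phi (ht : t ∈ Ici (0 : ℝ)) :
    HasDerivWithinAt (Phi · z) (Phi t z - Phi t z ^ 3) (Ici 0) t := by
  have hD := Phi_radicand_pos z ht
  have hradicand : HasDerivAt (fun s => z ^ 2 + (1 - z ^ 2) * Real.exp (-2 * s))
      ((1 - z ^ 2) * (Real.exp (-2 * t) * (-2 * 1))) t :=
    ((((hasDerivAt_id t).const_mul (-2)).exp).const_mul _).const_add _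
  have hs := (Real.sqrt_pos.2 hD).ne'
  refine ((hasDerivAt_const t z).div (hradicand.sqrt hD.ne') hs).hasDerivWithinAt.congr_deriv ?_
  have hsq := Real.sq_sqrt hD.le
  rw [Phi]
  generalize √(z ^ 2 + (1 - z ^ 2) * Real.exp (-2 * t)) = r at hs hsq ⊢
  generalize Real.exp (-2 * t) = E at hsq ⊢
  field_simp
  linear_combination -z * hsq

theorem abs_Phi_sub_le (ha : 0 ≤ t) (hab : t ≤ τ) :
    |Phi τ z - Phi t z| ≤ (max 1 |z| + max 1 |z| ^ 3) * (τ - t) :=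
  abs_sub_le_of_hasDerivWithinAt_Ici (fun _ hs => hasDerivWithinAt_Phi z hs)
    (fun _ hs => abs_sub_cube_le (abs_Phi_le z hs)) ha hab

theorem abs_Phi_second_difference_le (hτ : 0 ≤ τ) (hh : 0 ≤ h) :
    |Phi (τ + h) z - Phi τ z - (Phi h z - Phi 0 z)| ≤ 8 * (1 + |z| ^ 5) * h * τ := by
  set M := max 1 |z|
  have hM : 1 ≤ M := le_max_left _ _
  have hLip : ∀ s t, 0 ≤ s → s ≤ t →
      |(Phi t z - Phi t z ^ 3) - (Phi s z - Phi s z ^ 3)| ≤ 8 * (1 + |z| ^ 5) * (t - s) :=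
    fun s t hs hst => calc
      _ ≤ (1 + 3 * M ^ 2) * |Phi t z - Phi s z| :=
        abs_sub_cube_sub_sub_cube_le (abs_Phi_le z (hs.trans hst)) (abs_Phi_le z hs)
      _ ≤ (1 + 3 * M ^ 2) * ((M + M ^ 3) * (t - s)) := by gcongr; exact abs_Phi_sub_le z hs hst
      _ ≤ 8 * M ^ 5 * (t - s) := by
        rw [← mul_assoc]
        exact mul_le_mul_of_nonneg_right (one_add_three_mul_sq_mul_add_cube_le hM) (by linarith)
      _ ≤ 8 * (1 + |z| ^ 5) * (t - s) := by
        gcongr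
        exact max_one_abs_pow_le z 5
  exact abs_second_difference_le (fun _ hs => hasDerivWithinAt_Phi z hs) hLip hτ hh

theorem Psi_sub_Psi_Phi (hτ : 0 ≤ τ) (hh : 0 < h) :
    Psi h z - Psi h (Phi τ z) = -(Phi (τ + h) z - Phi τ z - (Phi h z - Phi 0 z)) / h := by
  rw [Psi, Psi, if_neg hh.ne', if_neg hh.ne', Phi_Phi z hτ hh.le, Phi_zero]
  ring

end Flow

theorem psi_flow_increment_bound_general (Δt₀ : ℝ) :
    ∃ C : ℝ, 0 < C ∧ ∀ τ Δt : ℝ, 0 ≤ τ → τ ≤ Δt → Δt ≤ Δt₀ → ∀ z : ℝ,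
      |Psi Δt z - Psi Δt (Phi τ z)| ≤ C * Δt * (1 + |z| ^ 5) := by
  refine ⟨8, by norm_num, fun τ Δt hτ hτΔ _ z => ?_⟩
  rcases (hτ.trans hτΔ).eq_or_lt with rfl | hΔ
  · obtain rfl : τ = 0 := le_antisymm hτΔ hτ
    simp [Phi_zero]
  rw [Psi_sub_Psi_Phi z hτ hΔ, abs_div, abs_neg, abs_of_pos hΔ, div_le_iff₀ hΔ]
  calc _ ≤ 8 * (1 + |z| ^ 5) * Δt * τ := abs_Phi_second_difference_le z hτ hΔ.le
    _ ≤ 8 * (1 + |z| ^ 5) * Δt * Δt := by gcongr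
    _ = 8 * Δt * (1 + |z| ^ 5) * Δt := by ring

/-- For every `Δt₀ ∈ (0,1]` there exists `C(Δt₀) ∈ (0,∞)` such that for all
`0 ≤ τ ≤ Δt ≤ Δt₀` and all `z ∈ ℝ`,
`|Ψ_{Δt}(z) - Ψ_{Δt}(Φ_τ(z))| ≤ C(Δt₀) Δt (1 + |z|⁵)`. -/
theorem psi_flow_increment_bound (Δt₀ : ℝ) (hΔt₀ : Δt₀ ∈ Set.Ioc (0 : ℝ) 1) :
    ∃ C : ℝ, 0 < C ∧ ∀ τ Δt : ℝ, 0 ≤ τ → τ ≤ Δt → Δt ≤ Δt₀ → ∀ z : ℝ,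
      |Psi Δt z - Psi Δt (Phi τ z)| ≤ C * Δt * (1 + |z| ^ 5) :=
  psi_flow_increment_bound_general Δt₀

end
end

section
/- For every α ∈ (0,1/2) and every ε ∈ (1/2 − α, 1 − 2α) there exists a constant C(α,ε) ∈ (0,∞) such that for all Δt ∈ (0,1], Σ_{j≥1} λ_j^{−2α−ε} (1 − (1+λ_jΔt)^{−2}) ≤ C(α,ε) Δt^α; equivalently, Σ_{j≥1} λ_j^{−2α−ε} (2λ_jΔt + (λ_jΔt)²)/(1+λ_jΔt)² ≤ C(α,ε) Δt^α. -/
open Real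

noncomputable section

/-- The Dirichlet eigenvalues `λ_j = j² π²` of the negative second derivative operator
on `(0,1)` (indexed so that `lam j` is `λ_{j+1}`). -/
def lam (j : ℕ) : ℝ := ((j : ℝ) + 1) ^ 2 * π ^ 2

lemma lam_pos (j : ℕ) : 0 < lam j := by
  unfold lam
  positivity

lemma lam_summable {p : ℝ} (hp : 1 < 2 * p) :
    Summable fun j : ℕ => lam j ^ (-p) := by
  have h : Summable fun n : ℕ => ((n : ℝ) ^ (2 * p))⁻¹ :=
    (Real.summable_nat_rpow_inv).2 hp
  have h2 := (summable_nat_add_iff 1).2 h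
  have h3 : Summable fun j : ℕ => ((j : ℝ) + 1) ^ (-(2 * p)) * (π ^ 2) ^ (-p) := by
    apply Summable.mul_right
    refine h2.congr fun j => ?_
    have hj : (0:ℝ) ≤ (j:ℝ) + 1 := by positivity
    rw [Real.rpow_neg hj]
    push_cast
    ring_nf
  refine h3.congr fun j => ?_
  have hj : (0:ℝ) ≤ (j:ℝ) + 1 := by positivity
  have hπ : (0:ℝ) ≤ π ^ 2 := by positivity
  rw [show lam j = ((j:ℝ)+1)^2 * π^2 from rfl, Real.mul_rpow (by positivity) hπ]
  congr 1
  rw [← Real.rpow_natCast ((j:ℝ)+1) 2, ← Real.rpow_mul hj]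
  norm_num

lemma term_le (α ε : ℝ) (hα0 : 0 < α) (hα1 : α ≤ 1) (Δt : ℝ) (h0 : 0 < Δt)
    (j : ℕ) :
    lam j ^ (-(2 * α) - ε) * (1 - ((1 + lam j * Δt) ^ 2)⁻¹)
      ≤ 2 * Δt ^ α * lam j ^ (-(α + ε)) := by
  have hLpos := lam_pos j
  set L := lam j with hL
  set x := L * Δt with hx
  have hxpos : 0 < x := mul_pos hLpos h0
  have h1x : 0 < 1 + x := by linarith
  have hkey : ((1 + x) ^ 2)⁻¹ * (1 + x) ^ 2 = 1 := inv_mul_cancel₀ (by positivity)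
  have hinv0 : 0 ≤ ((1 + x) ^ 2)⁻¹ := by positivity
  have hg1 : 1 - ((1 + x) ^ 2)⁻¹ ≤ 1 := by linarith
  have hg2 : 1 - ((1 + x) ^ 2)⁻¹ ≤ 2 * x := by nlinarith [sq_nonneg x, mul_pos hxpos hxpos]
  have hmin : 1 - ((1 + x) ^ 2)⁻¹ ≤ (2 * x) ^ α := by
    rcases le_total (2 * x) 1 with h | h
    · calc 1 - ((1 + x) ^ 2)⁻¹ ≤ 2 * x := hg2
        _ = (2 * x) ^ (1 : ℝ) := (Real.rpow_one _).symm
        _ ≤ (2 * x) ^ α := Real.rpow_le_rpow_of_exponent_ge (by positivity) h hα1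
    · calc 1 - ((1 + x) ^ 2)⁻¹ ≤ 1 := hg1
        _ = (1 : ℝ) ^ α := (Real.one_rpow _).symm
        _ ≤ (2 * x) ^ α := Real.rpow_le_rpow (by norm_num) h hα0.le
  have hrw : (2 * x) ^ α = 2 ^ α * (L ^ α * Δt ^ α) := by
    rw [hx, Real.mul_rpow (by norm_num) (by positivity), Real.mul_rpow hLpos.le h0.le]
  have hLexp : L ^ (-(2 * α) - ε) * L ^ α = L ^ (-(α + ε)) := by
    rw [← Real.rpow_add hLpos]
    congr 1
    ring
  have h2α : (2 : ℝ) ^ α ≤ 2 := by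
    calc (2 : ℝ) ^ α ≤ 2 ^ (1 : ℝ) :=
      Real.rpow_le_rpow_of_exponent_le (by norm_num) hα1
      _ = 2 := Real.rpow_one 2
  calc L ^ (-(2 * α) - ε) * (1 - ((1 + x) ^ 2)⁻¹)
      ≤ L ^ (-(2 * α) - ε) * ((2 * x) ^ α) :=
        mul_le_mul_of_nonneg_left hmin (Real.rpow_nonneg hLpos.le _)
    _ = 2 ^ α * Δt ^ α * (L ^ (-(2 * α) - ε) * L ^ α) := by rw [hrw]; ring
    _ = 2 ^ α * Δt ^ α * L ^ (-(α + ε)) := by rw [hLexp]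
    _ ≤ 2 * Δt ^ α * L ^ (-(α + ε)) := by
        gcongr

/-- For every `α ∈ (0, 1/2)` and every `ε ∈ (1/2 - α, 1 - 2α)` there exists
`C(α,ε) ∈ (0,∞)` such that for all `Δt ∈ (0,1]`,
`Σ_j λ_j^{-2α-ε} (1 - (1 + λ_j Δt)^{-2}) ≤ C(α,ε) Δt^α`. -/
theorem resolvent_trace_bound (α ε : ℝ) (hα : α ∈ Set.Ioo (0 : ℝ) (1 / 2))
    (hε : ε ∈ Set.Ioo (1 / 2 - α) (1 - 2 * α)) :
    ∃ C : ℝ, 0 < C ∧ ∀ Δt ∈ Set.Ioc (0 : ℝ) 1,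
      ∑' j : ℕ, lam j ^ (-(2 * α) - ε) * (1 - ((1 + lam j * Δt) ^ 2)⁻¹)
        ≤ C * Δt ^ α := by
  obtain ⟨hα0, hα1⟩ := hα
  obtain ⟨hε1, hε2⟩ := hε
  have hp : 1 < 2 * (α + ε) := by linarith
  have hS : Summable fun j : ℕ => lam j ^ (-(α + ε)) := lam_summable hp
  set S := ∑' j : ℕ, lam j ^ (-(α + ε)) with hSdef
  have hS0 : 0 ≤ S := tsum_nonneg fun j => Real.rpow_nonneg (lam_pos j).le _
  refine ⟨2 * (S + 1), by linarith, fun Δt hΔt => ?_⟩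
  obtain ⟨h0, h1⟩ := hΔt
  have hmaj : Summable fun j : ℕ => 2 * Δt ^ α * lam j ^ (-(α + ε)) := hS.mul_left _
  have hterm : ∀ j : ℕ,
      lam j ^ (-(2 * α) - ε) * (1 - ((1 + lam j * Δt) ^ 2)⁻¹)
        ≤ 2 * Δt ^ α * lam j ^ (-(α + ε)) :=
    fun j => term_le α ε hα0 (by linarith) Δt h0 j
  have hnn : ∀ j : ℕ,
      0 ≤ lam j ^ (-(2 * α) - ε) * (1 - ((1 + lam j * Δt) ^ 2)⁻¹) := by
    intro j
    have hx : 0 < lam j * Δt := mul_pos (lam_pos j) h0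
    have h2 : (1 : ℝ) ≤ (1 + lam j * Δt) ^ 2 := by nlinarith
    have h3 : ((1 + lam j * Δt) ^ 2)⁻¹ ≤ 1 := by
      rw [inv_le_one_iff₀]; right; exact h2
    exact mul_nonneg (Real.rpow_nonneg (lam_pos j).le _) (by linarith)
  have hsum : Summable fun j : ℕ =>
      lam j ^ (-(2 * α) - ε) * (1 - ((1 + lam j * Δt) ^ 2)⁻¹) :=
    Summable.of_nonneg_of_le hnn hterm hmaj
  calc ∑' j : ℕ, lam j ^ (-(2 * α) - ε) * (1 - ((1 + lam j * Δt) ^ 2)⁻¹)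
      ≤ ∑' j : ℕ, 2 * Δt ^ α * lam j ^ (-(α + ε)) := Summable.tsum_le_tsum hterm hsum hmaj
    _ = 2 * Δt ^ α * S := tsum_mul_left
    _ ≤ 2 * (S + 1) * Δt ^ α := by nlinarith [Real.rpow_nonneg h0.le α]

end
end
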